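/- Completeness of proof-relevant possible-world semantics for MLC: for any two terms Γ ⊢ t : A and Γ ⊢ u : A of MLC, if ⟦t⟧ = ⟦u⟧ in every proof-relevant possible-world model determined by an MLC-frame, then Γ ⊢ t ≡ u : A in the equational theory of MLC. -/

import Mathlib

open CategoryTheory

/-- Types of MLC. -/
inductive Ty : Type
  | base : Ty
  | unit : Ty
  | prod : Ty → Ty → Ty
  | arr : Ty → Ty → Ty
  | dia : Ty → Ty

/-- Typing contexts (the head is the most recently bound variable). -/
abbrev Ctx := List Ty

/-- Typed de Bruijn variables: `Var Γ A` witnesses that `x : A` occurs in `Γ`. -/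
inductive Var : Ctx → Ty → Type
  | zero {Γ A} : Var (A :: Γ) A
  | succ {Γ A B} : Var Γ A → Var (B :: Γ) A

/-- Well-typed terms of MLC (intrinsically typed): `Tm Γ A` is the type of
typing derivations `Γ ⊢ t : A`. -/
inductive Tm : Ctx → Ty → Type
  | var {Γ A} : Var Γ A → Tm Γ A
  | unit {Γ} : Tm Γ .unit
  | pair {Γ A B} : Tm Γ A → Tm Γ B → Tm Γ (.prod A B)
  | fst {Γ A B} : Tm Γ (.prod A B) → Tm Γ A
  | snd {Γ A B} : Tm Γ (.prod A B) → Tm Γ B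
  | lam {Γ A B} : Tm (A :: Γ) B → Tm Γ (.arr A B)
  | app {Γ A B} : Tm Γ (.arr A B) → Tm Γ A → Tm Γ B
  | ret {Γ A} : Tm Γ A → Tm Γ (.dia A)
  | lett {Γ A B} : Tm Γ (.dia A) → Tm (A :: Γ) (.dia B) → Tm Γ (.dia B)

/-- Order-preserving embeddings of contexts. -/
inductive OPE : Ctx → Ctx → Type
  | nil : OPE [] []
  | drop {Γ Γ'} (A : Ty) : OPE Γ Γ' → OPE Γ (A :: Γ')
  | keep {Γ Γ'} (A : Ty) : OPE (Γ) (Γ') → OPE (A :: Γ) (A :: Γ')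

/-- The identity embedding. -/
def OPE.id : ∀ (Γ : Ctx), OPE Γ Γ
  | [] => .nil
  | A :: Γ => .keep A (OPE.id Γ)

/-- Action of an embedding on variables. -/
def OPE.var : ∀ {Γ Γ' : Ctx} {A : Ty}, OPE Γ Γ' → Var Γ A → Var Γ' A
  | _, _, _, .drop _ ρ, x => .succ (ρ.var x)
  | _, _, _, .keep _ _, .zero => .zero
  | _, _, _, .keep _ ρ, .succ x => .succ (ρ.var x)

/-- Weakening (renaming) of terms along an embedding. -/
def Tm.rename : ∀ {Γ Γ' : Ctx} {A : Ty}, OPE Γ Γ' → Tm Γ A → Tm Γ' A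
  | _, _, _, ρ, .var x => .var (ρ.var x)
  | _, _, _, _, .unit => .unit
  | _, _, _, ρ, .pair t u => .pair (t.rename ρ) (u.rename ρ)
  | _, _, _, ρ, .fst t => .fst (t.rename ρ)
  | _, _, _, ρ, .snd t => .snd (t.rename ρ)
  | _, _, _, ρ, .lam (A := A) t => .lam (t.rename (.keep A ρ))
  | _, _, _, ρ, .app t u => .app (t.rename ρ) (u.rename ρ)
  | _, _, _, ρ, .ret t => .ret (t.rename ρ)
  | _, _, _, ρ, .lett (A := A) t u => .lett (t.rename ρ) (u.rename (.keep A ρ))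

/-- Simultaneous substitutions. -/
def Subst (Γ Δ : Ctx) : Type := ∀ (A : Ty), Var Γ A → Tm Δ A

/-- Lifting a substitution under a binder. -/
def Subst.lift {Γ Δ : Ctx} (A : Ty) (σ : Subst Γ Δ) : ∀ (B : Ty), Var (A :: Γ) B → Tm (A :: Δ) B
  | _, .zero => .var .zero
  | _, .succ y => (σ _ y).rename (.drop A (OPE.id Δ))

/-- Action of a substitution on terms. -/
def Tm.subst : ∀ {Γ Δ : Ctx} {A : Ty}, Subst Γ Δ → Tm Γ A → Tm Δ A
  | _, _, _, σ, .var x => σ _ x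
  | _, _, _, _, .unit => .unit
  | _, _, _, σ, .pair t u => .pair (t.subst σ) (u.subst σ)
  | _, _, _, σ, .fst t => .fst (t.subst σ)
  | _, _, _, σ, .snd t => .snd (t.subst σ)
  | _, _, _, σ, .lam (A := A) t => .lam (t.subst (σ.lift A))
  | _, _, _, σ, .app t u => .app (t.subst σ) (u.subst σ)
  | _, _, _, σ, .ret t => .ret (t.subst σ)
  | _, _, _, σ, .lett (A := A) t u => .lett (t.subst σ) (u.subst (σ.lift A))

/-- The substitution sending the last-bound variable to `u` and every other
variable to itself. -/
def Subst.single {Γ : Ctx} {A : Ty} (u : Tm Γ A) : ∀ (B : Ty), Var (A :: Γ) B → Tm Γ B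
  | _, .zero => u
  | _, .succ y => .var y

/-- Substitution of a single term for the last-bound variable. -/
def subst0 {Γ : Ctx} {A B : Ty} (u : Tm Γ A) (t : Tm (A :: Γ) B) : Tm Γ B :=
  t.subst (Subst.single u)

/-- Weakening of a term by one fresh variable. -/
def wk1 {Γ : Ctx} {A B : Ty} (t : Tm Γ A) : Tm (B :: Γ) A :=
  t.rename (.drop B (OPE.id Γ))

/-- The equational theory `Γ ⊢ t ≡ u : A` of MLC. -/
inductive EqTm : ∀ {Γ : Ctx} {A : Ty}, Tm Γ A → Tm Γ A → Prop
  | refl {Γ A} (t : Tm Γ A) : EqTm t t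
  | symm {Γ A} {t u : Tm Γ A} : EqTm t u → EqTm u t
  | trans {Γ A} {t u v : Tm Γ A} : EqTm t u → EqTm u v → EqTm t v
  | pair_congr {Γ A B} {t t' : Tm Γ A} {u u' : Tm Γ B} :
      EqTm t t' → EqTm u u' → EqTm (.pair t u) (.pair t' u')
  | fst_congr {Γ A B} {t t' : Tm Γ (.prod A B)} : EqTm t t' → EqTm (.fst t) (.fst t')
  | snd_congr {Γ A B} {t t' : Tm Γ (.prod A B)} : EqTm t t' → EqTm (.snd t) (.snd t')
  | lam_congr {Γ A B} {t t' : Tm (A :: Γ) B} : EqTm t t' → EqTm (.lam t) (.lam t')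
  | app_congr {Γ A B} {t t' : Tm Γ (.arr A B)} {u u' : Tm Γ A} :
      EqTm t t' → EqTm u u' → EqTm (.app t u) (.app t' u')
  | ret_congr {Γ A} {t t' : Tm Γ A} : EqTm t t' → EqTm (.ret t) (.ret t')
  | lett_congr {Γ A B} {t t' : Tm Γ (.dia A)} {u u' : Tm (A :: Γ) (.dia B)} :
      EqTm t t' → EqTm u u' → EqTm (.lett t u) (.lett t' u')
  | unit_eta {Γ} (t : Tm Γ .unit) : EqTm t .unit
  | prod_beta1 {Γ A B} (t : Tm Γ A) (u : Tm Γ B) : EqTm (.fst (.pair t u)) t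
  | prod_beta2 {Γ A B} (t : Tm Γ A) (u : Tm Γ B) : EqTm (.snd (.pair t u)) u
  | prod_eta {Γ A B} (t : Tm Γ (.prod A B)) : EqTm t (.pair (.fst t) (.snd t))
  | arr_beta {Γ A B} (t : Tm (A :: Γ) B) (u : Tm Γ A) :
      EqTm (.app (.lam t) u) (subst0 u t)
  | arr_eta {Γ A B} (t : Tm Γ (.arr A B)) :
      EqTm t (.lam (.app (wk1 t) (.var .zero)))
  | dia_beta {Γ A B} (t : Tm Γ A) (u : Tm (A :: Γ) (.dia B)) :
      EqTm (.lett (.ret t) u) (subst0 t u)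
  | dia_eta {Γ A} (t : Tm Γ (.dia A)) : EqTm t (.lett t (.ret (.var .zero)))
  | dia_ass {Γ A B C} (t : Tm Γ (.dia A)) (u : Tm (A :: Γ) (.dia B))
      (u' : Tm (B :: Γ) (.dia C)) :
      EqTm (.lett (.lett t u) u')
        (.lett t (.lett u (u'.rename (.keep B (.drop A (OPE.id Γ))))))

/-- A proof-relevant MLC-frame. -/
structure MLCFrame where
  W : Type
  [instCat : Category.{0} W]
  R : W → W → Type
  incl : ∀ {w v : W}, R w v → (w ⟶ v)
  factorW : ∀ {w w' v : W}, (w ⟶ w') → R w v → W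
  factor₁ : ∀ {w w' v : W} (i : w ⟶ w') (m : R w v), R w' (factorW i m)
  factor₂ : ∀ {w w' v : W} (i : w ⟶ w') (m : R w v), v ⟶ factorW i m
  reflR : ∀ w : W, R w w
  transR : ∀ {u v w : W}, R u v → R v w → R u w
  factorW_id : ∀ {w v : W} (m : R w v), factorW (𝟙 w) m = v
  factor₁_id : ∀ {w v : W} (m : R w v), HEq (factor₁ (𝟙 w) m) m
  factor₂_id : ∀ {w v : W} (m : R w v), HEq (factor₂ (𝟙 w) m) (𝟙 v)
  factorW_comp : ∀ {w w' w'' v : W} (i : w ⟶ w') (j : w' ⟶ w'') (m : R w v),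
    factorW (i ≫ j) m = factorW j (factor₁ i m)
  factor₁_comp : ∀ {w w' w'' v : W} (i : w ⟶ w') (j : w' ⟶ w'') (m : R w v),
    HEq (factor₁ (i ≫ j) m) (factor₁ j (factor₁ i m))
  factor₂_comp : ∀ {w w' w'' v : W} (i : w ⟶ w') (j : w' ⟶ w'') (m : R w v),
    HEq (factor₂ (i ≫ j) m) (factor₂ i m ≫ factor₂ j (factor₁ i m))
  incl_natural : ∀ {w w' v : W} (i : w ⟶ w') (m : R w v),
    incl m ≫ factor₂ i m = i ≫ incl (factor₁ i m)
  factorW_refl : ∀ {w w' : W} (i : w ⟶ w'), factorW i (reflR w) = w'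
  factor₁_refl : ∀ {w w' : W} (i : w ⟶ w'), HEq (factor₁ i (reflR w)) (reflR w')
  factor₂_refl : ∀ {w w' : W} (i : w ⟶ w'), HEq (factor₂ i (reflR w)) i
  incl_refl : ∀ w : W, incl (reflR w) = 𝟙 w
  factorW_trans : ∀ {w w' u v : W} (i : w ⟶ w') (m₁ : R w u) (m₂ : R u v),
    factorW i (transR m₁ m₂) = factorW (factor₂ i m₁) m₂
  factor₁_trans : ∀ {w w' u v : W} (i : w ⟶ w') (m₁ : R w u) (m₂ : R u v),
    HEq (factor₁ i (transR m₁ m₂))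
        (transR (factor₁ i m₁) (factor₁ (factor₂ i m₁) m₂))
  factor₂_trans : ∀ {w w' u v : W} (i : w ⟶ w') (m₁ : R w u) (m₂ : R u v),
    HEq (factor₂ i (transR m₁ m₂)) (factor₂ (factor₂ i m₁) m₂)
  transR_assoc : ∀ {u v w x : W} (m₁ : R u v) (m₂ : R v w) (m₃ : R w x),
    transR (transR m₁ m₂) m₃ = transR m₁ (transR m₂ m₃)
  transR_refl_left : ∀ {w v : W} (m : R w v), transR (reflR w) m = m
  transR_refl_right : ∀ {w v : W} (m : R w v), transR m (reflR v) = m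
  incl_trans : ∀ {u v w : W} (m₁ : R u v) (m₂ : R v w),
    incl (transR m₁ m₂) = incl m₁ ≫ incl m₂

attribute [instance] MLCFrame.instCat

variable (F : MLCFrame) (Vι : F.W ⥤ Type)

/-- Interpretation of types as presheaves (object parts). -/
def evalTy : Ty → F.W → Type
  | .base, w => Vι.obj w
  | .unit, _ => PUnit
  | .prod A B, w => evalTy A w × evalTy B w
  | .arr A B, w => ∀ w' : F.W, (w ⟶ w') → evalTy A w' → evalTy B w'
  | .dia A, w => Σ v : F.W, F.R w v × evalTy A v

/-- Transport of the interpretation of a type along `i : w ⟶ w'`. -/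
def tpTy : ∀ (A : Ty) {w w' : F.W}, (w ⟶ w') → evalTy F Vι A w → evalTy F Vι A w'
  | .base, _, _, i, a => Vι.map i a
  | .unit, _, _, _, _ => PUnit.unit
  | .prod A B, _, _, i, a => (tpTy A i a.1, tpTy B i a.2)
  | .arr _ _, _, _, i, f => fun w'' j a => f w'' (i ≫ j) a
  | .dia A, _, _, i, a =>
      ⟨F.factorW i a.2.1, F.factor₁ i a.2.1, tpTy A (F.factor₂ i a.2.1) a.2.2⟩

/-- Interpretation of contexts (object parts). -/
def evalCtx : Ctx → F.W → Type
  | [], _ => PUnit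
  | A :: Γ, w => evalCtx Γ w × evalTy F Vι A w

/-- Transport of the interpretation of a context along `i : w ⟶ w'`. -/
def tpCtx : ∀ (Γ : Ctx) {w w' : F.W}, (w ⟶ w') → evalCtx F Vι Γ w → evalCtx F Vι Γ w'
  | [], _, _, _, _ => PUnit.unit
  | A :: Γ, _, _, i, γ => (tpCtx Γ i γ.1, tpTy F Vι A i γ.2)

/-- Interpretation of variables: projection out of the environment. -/
def evalVar : ∀ {Γ : Ctx} {A : Ty}, Var Γ A → ∀ {w : F.W}, evalCtx F Vι Γ w → evalTy F Vι A w
  | _, _, .zero, _, γ => γ.2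
  | _, _, .succ x, _, γ => evalVar x γ.1

/-- Interpretation of terms. -/
def evalTm : ∀ {Γ : Ctx} {A : Ty}, Tm Γ A → ∀ w : F.W, evalCtx F Vι Γ w → evalTy F Vι A w
  | _, _, .var x, _, γ => evalVar F Vι x γ
  | _, _, .unit, _, _ => PUnit.unit
  | _, _, .pair t u, w, γ => (evalTm t w γ, evalTm u w γ)
  | _, _, .fst t, w, γ => (evalTm t w γ).1
  | _, _, .snd t, w, γ => (evalTm t w γ).2
  | _, _, .lam t, _, γ => fun w' i a => evalTm t w' (tpCtx F Vι _ i γ, a)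
  | _, _, .app t u, w, γ => evalTm t w γ w (𝟙 w) (evalTm u w γ)
  | _, _, .ret t, w, γ => ⟨w, F.reflR w, evalTm t w γ⟩
  | _, _, .lett t u, w, γ =>
      let x := evalTm t w γ
      let y := evalTm u x.1 (tpCtx F Vι _ (F.incl x.2.1) γ, x.2.2)
      ⟨y.1, F.transR x.2.1 y.2.1, y.2.2⟩

/-!
Completeness is proved by normalization by evaluation in a term model. Its worlds are
contexts, its morphisms order-preserving embeddings, and `Γ R Δ` consists of telescopes of
`let`-bindings extending `Γ` to `Δ`; the valuation at `ι` is the presheaf of terms of type `ι`.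
A Kripke logical relation between values of this model and terms, preserved by renaming and
closed under `≡`, connects two maps `reflect : Tm → value` and `reify : value → Tm` with
`t ≡ reify a` whenever `a` is related to `t`. The fundamental lemma relates the value of every
term to the term itself, so `t ≡ reify ⟦t⟧` at the environment of reflected variables; two
terms with the same value in this one model are therefore equal.
-/

namespace OPE

def comp : ∀ {Γ Δ Θ : Ctx}, OPE Γ Δ → OPE Δ Θ → OPE Γ Θ
  | _, _, _, ρ, .drop A ρ' => .drop A (comp ρ ρ')
  | _, _, _, .nil, .nil => .nil
  | _, _, _, .drop A ρ, .keep _ ρ' => .drop A (comp ρ ρ')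
  | _, _, _, .keep A ρ, .keep _ ρ' => .keep A (comp ρ ρ')

theorem keep_id (A : Ty) (Γ : Ctx) : keep A (OPE.id Γ) = OPE.id (A :: Γ) := rfl

@[simp] theorem comp_id {Γ Δ : Ctx} (ρ : OPE Γ Δ) : ρ.comp (OPE.id Δ) = ρ := by
  induction ρ <;> simp_all [OPE.id, comp]

@[simp] theorem id_comp {Γ Δ : Ctx} (ρ : OPE Γ Δ) : (OPE.id Γ).comp ρ = ρ := by
  induction ρ <;> simp_all [OPE.id, comp]

theorem comp_assoc : ∀ {Γ Δ Θ Ξ : Ctx} (ρ₁ : OPE Γ Δ) (ρ₂ : OPE Δ Θ)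
    (ρ₃ : OPE Θ Ξ),
    (ρ₁.comp ρ₂).comp ρ₃ = ρ₁.comp (ρ₂.comp ρ₃)
  | _, _, _, _, _, _, .drop _ _ => congrArg (drop _) (comp_assoc _ _ _)
  | _, _, _, _, _, .drop _ _, .keep _ _ => congrArg (drop _) (comp_assoc _ _ _)
  | _, _, _, _, .drop _ _, .keep _ _, .keep _ _ => congrArg (drop _) (comp_assoc _ _ _)
  | _, _, _, _, .keep _ _, .keep _ _, .keep _ _ => congrArg (keep _) (comp_assoc _ _ _)
  | _, _, _, _, .nil, .nil, .nil => rfl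

@[simp] theorem var_id {Γ : Ctx} {A : Ty} (x : Var Γ A) : (OPE.id Γ).var x = x := by
  induction x <;> simp_all [OPE.id, OPE.var]

theorem var_comp : ∀ {Γ Δ Θ : Ctx} {A : Ty} (ρ : OPE Γ Δ) (ρ' : OPE Δ Θ) (x : Var Γ A),
    (ρ.comp ρ').var x = ρ'.var (ρ.var x)
  | _, _, _, _, ρ, .drop _ ρ', x => congrArg Var.succ (var_comp ρ ρ' x)
  | _, _, _, _, .drop _ ρ, .keep _ ρ', x => congrArg Var.succ (var_comp ρ ρ' x)
  | _, _, _, _, .nil, .nil, x => nomatch x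
  | _, _, _, _, .keep _ _, .keep _ _, .zero => rfl
  | _, _, _, _, .keep _ ρ, .keep _ ρ', .succ x => congrArg Var.succ (var_comp ρ ρ' x)

end OPE

instance : Category.{0} Ctx where
  Hom := OPE
  id := OPE.id
  comp := OPE.comp
  id_comp := OPE.id_comp
  comp_id := OPE.comp_id
  assoc := OPE.comp_assoc

namespace Tm

@[simp] theorem rename_id {Γ : Ctx} {A : Ty} (t : Tm Γ A) : t.rename (OPE.id Γ) = t := by
  induction t <;> simp_all [rename, OPE.id]

theorem rename_rename {Γ Δ Θ : Ctx} {A : Ty} (ρ : OPE Γ Δ) (ρ' : OPE Δ Θ) (t : Tm Γ A) :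
    (t.rename ρ).rename ρ' = t.rename (ρ.comp ρ') := by
  induction t generalizing Δ Θ <;> simp_all [rename, OPE.var_comp, OPE.comp]

end Tm

namespace Subst

def id (Γ : Ctx) : Subst Γ Γ := fun _ x => .var x

def cons {Γ Δ : Ctx} {A : Ty} (u : Tm Δ A) (σ : Subst Γ Δ) : Subst (A :: Γ) Δ
  | _, .zero => u
  | _, .succ y => σ _ y

theorem lift_keep {Γ Δ Θ : Ctx} (A : Ty) (ρ : OPE Γ Δ) (σ : Subst Δ Θ) :
    (fun B x => σ.lift A B ((OPE.keep A ρ).var x)) = lift A (fun B x => σ B (ρ.var x)) := by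
  funext B x; cases x <;> rfl

theorem rename_lift {Γ Δ Θ : Ctx} (A : Ty) (σ : Subst Γ Δ) (ρ : OPE Δ Θ) :
    (fun B x => (σ.lift A B x).rename (.keep A ρ)) = lift A (fun B x => (σ B x).rename ρ) := by
  funext B x; cases x <;> simp [lift, Tm.rename, OPE.var, Tm.rename_rename, OPE.comp]

end Subst

namespace Tm

theorem subst_rename {Γ Δ Θ : Ctx} {A : Ty} (ρ : OPE Γ Δ) (σ : Subst Δ Θ) (t : Tm Γ A) :
    (t.rename ρ).subst σ = t.subst (fun B x => σ B (ρ.var x)) := by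
  induction t generalizing Δ Θ with
  | lam t ih => simp only [rename, subst, ih (.keep _ ρ) (σ.lift _), Subst.lift_keep]
  | lett t u iht ihu =>
    simp only [rename, subst, iht, ihu (.keep _ ρ) (σ.lift _), Subst.lift_keep]
  | _ => simp_all [rename, subst]

theorem rename_subst {Γ Δ Θ : Ctx} {A : Ty} (σ : Subst Γ Δ) (ρ : OPE Δ Θ) (t : Tm Γ A) :
    (t.subst σ).rename ρ = t.subst (fun B x => (σ B x).rename ρ) := by
  induction t generalizing Δ Θ with
  | lam t ih => simp only [rename, subst, ih (σ.lift _) (.keep _ ρ), Subst.rename_lift]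
  | lett t u iht ihu =>
    simp only [rename, subst, iht, ihu (σ.lift _) (.keep _ ρ), Subst.rename_lift]
  | _ => simp_all [rename, subst]

end Tm

theorem Subst.lift_subst_lift {Γ Δ Θ : Ctx} (A : Ty) (σ : Subst Γ Δ) (τ : Subst Δ Θ) :
    (fun B x => (σ.lift A B x).subst (τ.lift A)) = lift A (fun B x => (σ B x).subst τ) := by
  funext B x
  cases x with
  | zero => rfl
  | succ y => simp [lift, Tm.subst_rename _ (τ.lift A), Tm.rename_subst, OPE.var]

namespace Tm

theorem subst_subst {Γ Δ Θ : Ctx} {A : Ty} (σ : Subst Γ Δ) (τ : Subst Δ Θ) (t : Tm Γ A) :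
    (t.subst σ).subst τ = t.subst (fun B x => (σ B x).subst τ) := by
  induction t generalizing Δ Θ with
  | lam t ih => simp only [subst, ih (σ.lift _) (τ.lift _), Subst.lift_subst_lift]
  | lett t u iht ihu =>
    simp only [subst, iht, ihu (σ.lift _) (τ.lift _), Subst.lift_subst_lift]
  | _ => simp_all [subst]

@[simp] theorem subst_id {Γ : Ctx} {A : Ty} (t : Tm Γ A) : t.subst (Subst.id Γ) = t := by
  have lift_id (A : Ty) {Γ : Ctx} : (Subst.id Γ).lift A = Subst.id (A :: Γ) := by
    funext B x; cases x <;> simp [Subst.lift, Subst.id, rename, OPE.var]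
  induction t <;> simp_all [subst, Subst.id]

theorem rename_subst0 {Γ Δ : Ctx} {A B : Ty} (ρ : OPE Γ Δ) (u : Tm Γ A) (t : Tm (A :: Γ) B) :
    (subst0 u t).rename ρ = subst0 (u.rename ρ) (t.rename (.keep A ρ)) := by
  unfold subst0
  rw [rename_subst (Subst.single u), subst_rename _ (Subst.single _)]
  congr 1; funext B x
  cases x <;> rfl

theorem rename_wk1 {Γ Δ : Ctx} {A B : Ty} (ρ : OPE Γ Δ) (t : Tm Γ A) :
    (wk1 (B := B) t).rename (.keep B ρ) = wk1 (t.rename ρ) := by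
  simp [wk1, rename_rename, OPE.comp]

theorem subst0_subst_lift {Γ Δ : Ctx} {A B : Ty} (σ : Subst Γ Δ) (u : Tm Δ A)
    (t : Tm (A :: Γ) B) : subst0 u (t.subst (σ.lift A)) = t.subst (Subst.cons u σ) := by
  refine (subst_subst _ (Subst.single u) t).trans (congrArg (subst · t) ?_)
  funext C x
  cases x with
  | zero => rfl
  | succ y =>
    refine (subst_rename (.drop A (OPE.id Δ)) (Subst.single u) (σ C y)).trans ?_
    simp only [OPE.var, OPE.var_id, Subst.single, Subst.cons]
    exact subst_id _

theorem subst0_rename_subst_lift {Γ Δ Δ' : Ctx} {A B : Ty} (σ : Subst Γ Δ) (ρ : OPE Δ Δ')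
    (u : Tm Δ' A) (t : Tm (A :: Γ) B) :
    subst0 u ((t.subst (σ.lift A)).rename (.keep A ρ)) =
      t.subst (Subst.cons u fun C x => (σ C x).rename ρ) := by
  rw [rename_subst (σ.lift A), Subst.rename_lift]
  exact subst0_subst_lift _ u t

end Tm

theorem EqTm.rename {Γ : Ctx} {A : Ty} {t u : Tm Γ A} (h : EqTm t u) {Δ : Ctx} (ρ : OPE Γ Δ) :
    EqTm (t.rename ρ) (u.rename ρ) := by
  induction h generalizing Δ with
  | refl t => exact .refl _
  | symm _ ih => exact .symm (ih ρ)
  | trans _ _ ih₁ ih₂ => exact .trans (ih₁ ρ) (ih₂ ρ)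
  | pair_congr _ _ ih₁ ih₂ => exact .pair_congr (ih₁ ρ) (ih₂ ρ)
  | fst_congr _ ih => exact .fst_congr (ih ρ)
  | snd_congr _ ih => exact .snd_congr (ih ρ)
  | lam_congr _ ih => exact .lam_congr (ih (.keep _ ρ))
  | app_congr _ _ ih₁ ih₂ => exact .app_congr (ih₁ ρ) (ih₂ ρ)
  | ret_congr _ ih => exact .ret_congr (ih ρ)
  | lett_congr _ _ ih₁ ih₂ => exact .lett_congr (ih₁ ρ) (ih₂ (.keep _ ρ))
  | unit_eta t => exact .unit_eta _
  | prod_beta1 t u => exact .prod_beta1 _ _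
  | prod_beta2 t u => exact .prod_beta2 _ _
  | prod_eta t => exact .prod_eta _
  | arr_beta t u => rw [Tm.rename_subst0]; exact .arr_beta _ _
  | arr_eta t => simp only [Tm.rename, Tm.rename_wk1]; exact .arr_eta _
  | dia_beta t u => rw [Tm.rename_subst0]; exact .dia_beta _ _
  | dia_eta t => exact .dia_eta _
  | dia_ass t u u' =>
    simpa [Tm.rename, Tm.rename_rename, OPE.comp] using
      EqTm.dia_ass (t.rename ρ) (u.rename (.keep _ ρ)) (u'.rename (.keep _ ρ))

/-- `Lets Γ Δ` is a telescope `let x₁ = c₁ in … let xₙ = cₙ in _` leading from `Γ` to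
`Δ = Aₙ :: … :: A₁ :: Γ`: the accessibility relation of the term model. -/
inductive Lets : Ctx → Ctx → Type
  | nil {Γ} : Lets Γ Γ
  | cons {Γ Δ} {A : Ty} : Tm Γ (.dia A) → Lets (A :: Γ) Δ → Lets Γ Δ

namespace Lets

def incl : ∀ {Γ Δ}, Lets Γ Δ → OPE Γ Δ
  | _, _, .nil => OPE.id _
  | _, _, .cons (A := A) _ k => (OPE.drop A (OPE.id _)).comp k.incl

def append : ∀ {Γ Δ Θ}, Lets Γ Δ → Lets Δ Θ → Lets Γ Θ
  | _, _, _, .nil, k₂ => k₂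
  | _, _, _, .cons c k, k₂ => .cons c (k.append k₂)

/-- Transport of a telescope along an embedding `Γ → Γ'`, together with the induced
embedding of its target. -/
def factor : ∀ {Γ Γ' Δ}, OPE Γ Γ' → Lets Γ Δ → Σ Θ, Lets Γ' Θ × OPE Δ Θ
  | _, Γ', _, ρ, .nil => ⟨Γ', .nil, ρ⟩
  | _, _, _, ρ, .cons (A := A) c k =>
    ⟨(factor (.keep A ρ) k).1, .cons (c.rename ρ) (factor (.keep A ρ) k).2.1,
      (factor (.keep A ρ) k).2.2⟩

theorem factor_id : ∀ {Γ Δ} (k : Lets Γ Δ), factor (OPE.id Γ) k = ⟨Δ, k, OPE.id Δ⟩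
  | _, _, .nil => rfl
  | _, _, .cons c k => by
    simp only [factor]
    rw [OPE.keep_id, factor_id k, Tm.rename_id]

theorem factor_comp : ∀ {Γ Γ' Γ'' Δ} (ρ : OPE Γ Γ') (ρ' : OPE Γ' Γ'') (k : Lets Γ Δ),
    factor (ρ.comp ρ') k =
      ⟨(factor ρ' (factor ρ k).2.1).1, (factor ρ' (factor ρ k).2.1).2.1,
        (factor ρ k).2.2.comp (factor ρ' (factor ρ k).2.1).2.2⟩
  | _, _, _, _, _, _, .nil => rfl
  | _, _, _, _, ρ, ρ', .cons (A := A) c k => by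
    simp only [factor]
    rw [show OPE.keep A (ρ.comp ρ') = (OPE.keep A ρ).comp (OPE.keep A ρ') from rfl,
      factor_comp _ _ k, Tm.rename_rename]

theorem factor_append : ∀ {Γ Γ' Δ Θ} (ρ : OPE Γ Γ') (k₁ : Lets Γ Δ)
    (k₂ : Lets Δ Θ),
    factor ρ (k₁.append k₂) =
      ⟨(factor (factor ρ k₁).2.2 k₂).1,
        (factor ρ k₁).2.1.append (factor (factor ρ k₁).2.2 k₂).2.1,
        (factor (factor ρ k₁).2.2 k₂).2.2⟩
  | _, _, _, _, _, .nil, _ => rfl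
  | _, _, _, _, _, .cons _ k, k₂ => by
    simp only [factor, append]
    rw [factor_append _ k k₂]

theorem incl_comp_factor : ∀ {Γ Γ' Δ} (ρ : OPE Γ Γ') (k : Lets Γ Δ),
    k.incl.comp (factor ρ k).2.2 = ρ.comp (factor ρ k).2.1.incl
  | _, _, _, ρ, .nil => by simp [incl, factor]
  | _, _, _, ρ, .cons (A := A) _ k => by
    simp only [incl, factor]
    rw [OPE.comp_assoc, incl_comp_factor (.keep A ρ) k, ← OPE.comp_assoc, ← OPE.comp_assoc]
    simp [OPE.comp]

theorem append_nil : ∀ {Γ Δ} (k : Lets Γ Δ), k.append .nil = k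
  | _, _, .nil => rfl
  | _, _, .cons c k => congrArg (cons c) (append_nil k)

theorem append_assoc : ∀ {Γ Δ Θ Ξ} (k₁ : Lets Γ Δ) (k₂ : Lets Δ Θ)
    (k₃ : Lets Θ Ξ),
    (k₁.append k₂).append k₃ = k₁.append (k₂.append k₃)
  | _, _, _, _, .nil, _, _ => rfl
  | _, _, _, _, .cons c k, k₂, k₃ => congrArg (cons c) (append_assoc k k₂ k₃)

theorem incl_append : ∀ {Γ Δ Θ} (k₁ : Lets Γ Δ) (k₂ : Lets Δ Θ),
    (k₁.append k₂).incl = k₁.incl.comp k₂.incl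
  | _, _, _, .nil, k₂ => by simp [append, incl]
  | _, _, _, .cons c k, k₂ => by simp only [append, incl, incl_append k k₂, OPE.comp_assoc]

end Lets

def termFrame : MLCFrame where
  W := Ctx
  R := Lets
  incl := Lets.incl
  factorW i m := (Lets.factor i m).1
  factor₁ i m := (Lets.factor i m).2.1
  factor₂ i m := (Lets.factor i m).2.2
  reflR _ := .nil
  transR := Lets.append
  factorW_id m := congrArg (·.1) (Lets.factor_id m)
  factor₁_id m := congr_arg_heq (·.2.1) (Lets.factor_id m)
  factor₂_id m := congr_arg_heq (·.2.2) (Lets.factor_id m)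
  factorW_comp i j m := congrArg (·.1) (Lets.factor_comp i j m)
  factor₁_comp i j m := congr_arg_heq (·.2.1) (Lets.factor_comp i j m)
  factor₂_comp i j m := congr_arg_heq (·.2.2) (Lets.factor_comp i j m)
  incl_natural := Lets.incl_comp_factor
  factorW_refl _ := rfl
  factor₁_refl _ := HEq.rfl
  factor₂_refl _ := HEq.rfl
  incl_refl _ := rfl
  factorW_trans i m₁ m₂ := congrArg (·.1) (Lets.factor_append i m₁ m₂)
  factor₁_trans i m₁ m₂ := congr_arg_heq (·.2.1) (Lets.factor_append i m₁ m₂)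
  factor₂_trans i m₁ m₂ := congr_arg_heq (·.2.2) (Lets.factor_append i m₁ m₂)
  transR_assoc := Lets.append_assoc
  transR_refl_left _ := rfl
  transR_refl_right := Lets.append_nil
  incl_trans := Lets.incl_append

def termVal : termFrame.W ⥤ Type where
  obj Γ := Tm Γ .base
  map ρ := TypeCat.ofHom (Tm.rename ρ)
  map_id Γ := by ext t; exact Tm.rename_id t
  map_comp ρ ρ' := by ext t; exact (Tm.rename_rename ρ ρ' t).symm

namespace Lets

def wrap : ∀ {Γ Δ} {B : Ty}, Lets Γ Δ → Tm Δ (.dia B) → Tm Γ (.dia B)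
  | _, _, _, .nil, s => s
  | _, _, _, .cons c k, s => .lett c (k.wrap s)

theorem wrap_congr : ∀ {Γ Δ} {B : Ty} (k : Lets Γ Δ) {s s' : Tm Δ (.dia B)},
    EqTm s s' → EqTm (k.wrap s) (k.wrap s')
  | _, _, _, .nil, _, _, h => h
  | _, _, _, .cons c k, _, _, h => .lett_congr (.refl c) (wrap_congr k h)

theorem rename_wrap : ∀ {Γ Γ' Δ} {B : Ty} (ρ : OPE Γ Γ') (k : Lets Γ Δ)
    (s : Tm Δ (.dia B)),
    (k.wrap s).rename ρ = (factor ρ k).2.1.wrap (s.rename (factor ρ k).2.2)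
  | _, _, _, _, _, .nil, _ => rfl
  | _, _, _, _, ρ, .cons (A := A) _ k, s =>
    congrArg (Tm.lett _) (rename_wrap (.keep A ρ) k s)

theorem append_wrap : ∀ {Γ Δ Θ} {B : Ty} (k₁ : Lets Γ Δ) (k₂ : Lets Δ Θ)
    (s : Tm Θ (.dia B)),
    (k₁.append k₂).wrap s = k₁.wrap (k₂.wrap s)
  | _, _, _, _, .nil, _, _ => rfl
  | _, _, _, _, .cons c k, k₂, s => congrArg (Tm.lett c) (append_wrap k k₂ s)

theorem eqTm_lett_wrap : ∀ {Γ Δ : Ctx} {A B : Ty} (k : Lets Γ Δ) (s : Tm Δ (.dia A))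
    (u : Tm (A :: Γ) (.dia B)),
    EqTm (.lett (k.wrap s) u) (k.wrap (.lett s (u.rename (.keep A k.incl))))
  | _, _, _, _, .nil, s, u => by
    rw [wrap, wrap, incl, OPE.keep_id, Tm.rename_id]
    exact .refl _
  | Γ, _, A, _, .cons (A := C) c k, s, u => by
    refine (EqTm.dia_ass c (k.wrap s) u).trans (.lett_congr (.refl c) ?_)
    simpa [incl, Tm.rename_rename, OPE.comp] using
      eqTm_lett_wrap k s (u.rename (.keep A (.drop C (OPE.id Γ))))

theorem eqTm_lett_subst_lift {Γ Δ Θ : Ctx} {A B : Ty} {k : Lets Δ Θ} {t : Tm Δ (.dia A)}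
    {v : Tm Θ A} {σ : Subst Γ Δ} {u : Tm (A :: Γ) (.dia B)} {s : Tm Θ (.dia B)}
    (ht : EqTm t (k.wrap (.ret v)))
    (hu : EqTm (u.subst (Subst.cons v fun C x => (σ C x).rename k.incl)) s) :
    EqTm (.lett t (u.subst (σ.lift A))) (k.wrap s) := by
  refine (EqTm.lett_congr ht (.refl _)).trans ((eqTm_lett_wrap k _ _).trans (k.wrap_congr ?_))
  rw [← Tm.subst0_rename_subst_lift] at hu
  exact (EqTm.dia_beta _ _).trans hu

end Lets

def LogRel : ∀ (A : Ty) {Γ : Ctx}, evalTy termFrame termVal A Γ → Tm Γ A → Prop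
  | .base, _, a, t => EqTm a t
  | .unit, _, _, _ => True
  | .prod A B, _, a, t => LogRel A a.1 (.fst t) ∧ LogRel B a.2 (.snd t)
  | .arr A B, Γ, f, t => ∀ {Δ : Ctx} (ρ : OPE Γ Δ) (a : evalTy termFrame termVal A Δ)
      (u : Tm Δ A), LogRel A a u → LogRel B (f Δ ρ a) (.app (t.rename ρ) u)
  | .dia A, _, d, t => ∃ v : Tm d.1 A, LogRel A d.2.2 v ∧ EqTm t (d.2.1.wrap (.ret v))

mutual

def reflect : ∀ (A : Ty) {Γ : Ctx}, Tm Γ A → evalTy termFrame termVal A Γ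
  | .base, _, t => t
  | .unit, _, _ => PUnit.unit
  | .prod A B, _, t => (reflect A (.fst t), reflect B (.snd t))
  | .arr A B, _, t => fun _ ρ a => reflect B (.app (t.rename ρ) (reify A a))
  | .dia A, Γ, t => ⟨A :: Γ, .cons t .nil, reflect A (.var .zero)⟩

def reify : ∀ (A : Ty) {Γ : Ctx}, evalTy termFrame termVal A Γ → Tm Γ A
  | .base, _, a => a
  | .unit, _, _ => .unit
  | .prod A B, _, a => .pair (reify A a.1) (reify B a.2)
  | .arr A B, Γ, f => .lam (reify B (f (A :: Γ) (.drop A (OPE.id Γ)) (reflect A (.var .zero))))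
  | .dia A, _, d => d.2.1.wrap (.ret (reify A d.2.2))

end

namespace LogRel

theorem of_eqTm : ∀ (A : Ty) {Γ : Ctx} {a : evalTy termFrame termVal A Γ} {t t' : Tm Γ A},
    LogRel A a t → EqTm t t' → LogRel A a t'
  | .base, _, _, _, _, h, e => h.trans e
  | .unit, _, _, _, _, _, _ => trivial
  | .prod A B, _, _, _, _, h, e => ⟨of_eqTm A h.1 (.fst_congr e), of_eqTm B h.2 (.snd_congr e)⟩
  | .arr _ B, _, _, _, _, h, e => fun ρ a u hu =>
      of_eqTm B (h ρ a u hu) (.app_congr (e.rename ρ) (.refl u))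
  | .dia _, _, _, _, _, ⟨v, hv, ht⟩, e => ⟨v, hv, e.symm.trans ht⟩

theorem rename : ∀ (A : Ty) {Γ Δ : Ctx} (ρ : OPE Γ Δ) {a : evalTy termFrame termVal A Γ}
    {t : Tm Γ A}, LogRel A a t → LogRel A (tpTy termFrame termVal A ρ a) (t.rename ρ)
  | .base, _, _, ρ, _, _, h => EqTm.rename h ρ
  | .unit, _, _, _, _, _, _ => trivial
  | .prod A B, _, _, ρ, _, _, h => ⟨rename A ρ h.1, rename B ρ h.2⟩
  | .arr _ _, _, _, ρ, _, _, h => fun ρ' a u hu => by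
      have := h (ρ.comp ρ') a u hu
      rwa [← Tm.rename_rename] at this
  | .dia A, _, _, ρ, d, _, ⟨v, hv, ht⟩ =>
      ⟨v.rename (Lets.factor ρ d.2.1).2.2, rename A _ hv,
        Lets.rename_wrap ρ d.2.1 (.ret v) ▸ EqTm.rename ht ρ⟩

end LogRel

mutual

theorem logRel_reflect : ∀ (A : Ty) {Γ : Ctx} (t : Tm Γ A), LogRel A (reflect A t) t
  | .base, _, t => .refl t
  | .unit, _, _ => trivial
  | .prod A B, _, t => ⟨logRel_reflect A (.fst t), logRel_reflect B (.snd t)⟩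
  | .arr A B, _, _ => fun _ a u hu =>
      LogRel.of_eqTm B (logRel_reflect B _) (.app_congr (.refl _) (eqTm_reify A a u hu).symm)
  | .dia A, _, t => ⟨.var .zero, logRel_reflect A (.var .zero), .dia_eta t⟩

theorem eqTm_reify : ∀ (A : Ty) {Γ : Ctx} (a : evalTy termFrame termVal A Γ) (t : Tm Γ A),
    LogRel A a t → EqTm t (reify A a)
  | .base, _, _, _, h => h.symm
  | .unit, _, _, t, _ => .unit_eta t
  | .prod A B, _, a, t, h =>
      (EqTm.prod_eta t).trans (.pair_congr (eqTm_reify A a.1 _ h.1) (eqTm_reify B a.2 _ h.2))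
  | .arr A B, Γ, _, t, h =>
      (EqTm.arr_eta t).trans <| .lam_congr <| eqTm_reify B _ _ <|
        h (.drop A (OPE.id Γ)) _ (.var .zero) (logRel_reflect A (.var .zero))
  | .dia A, _, d, _, ⟨v, hv, ht⟩ =>
      ht.trans (d.2.1.wrap_congr (.ret_congr (eqTm_reify A d.2.2 v hv)))

end

def LogRelCtx : ∀ (Γ : Ctx) {Δ : Ctx}, evalCtx termFrame termVal Γ Δ → Subst Γ Δ → Prop
  | [], _, _, _ => True
  | A :: Γ, _, γ, σ =>
    LogRelCtx Γ γ.1 (fun B x => σ B (.succ x)) ∧ LogRel A γ.2 (σ A .zero)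

theorem LogRelCtx.rename : ∀ (Γ : Ctx) {Δ Δ' : Ctx} (ρ : OPE Δ Δ')
    {γ : evalCtx termFrame termVal Γ Δ} {σ : Subst Γ Δ}, LogRelCtx Γ γ σ →
    LogRelCtx Γ (tpCtx termFrame termVal Γ ρ γ) (fun B x => (σ B x).rename ρ)
  | [], _, _, _, _, _, _ => trivial
  | A :: Γ, _, _, ρ, _, _, h => ⟨LogRelCtx.rename Γ ρ h.1, LogRel.rename A ρ h.2⟩

theorem logRel_evalVar : ∀ {Γ : Ctx} {A : Ty} (x : Var Γ A) {Δ : Ctx}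
    {γ : evalCtx termFrame termVal Γ Δ} {σ : Subst Γ Δ}, LogRelCtx Γ γ σ →
    LogRel A (evalVar termFrame termVal x γ) (σ A x)
  | _, _, .zero, _, _, _, h => h.2
  | _, _, .succ x, _, _, _, h => logRel_evalVar x h.1

theorem logRel_evalTm : ∀ {Γ : Ctx} {A : Ty} (t : Tm Γ A) {Δ : Ctx}
    (γ : evalCtx termFrame termVal Γ Δ) (σ : Subst Γ Δ), LogRelCtx Γ γ σ →
    LogRel A (evalTm termFrame termVal t Δ γ) (t.subst σ)
  | _, _, .var x, _, _, _, h => logRel_evalVar x h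
  | _, _, .unit, _, _, _, _ => trivial
  | _, _, .pair t u, _, γ, σ, h =>
      ⟨(logRel_evalTm t γ σ h).of_eqTm _ (.symm (.prod_beta1 _ _)),
       (logRel_evalTm u γ σ h).of_eqTm _ (.symm (.prod_beta2 _ _))⟩
  | _, _, .fst t, _, γ, σ, h => (logRel_evalTm t γ σ h).1
  | _, _, .snd t, _, γ, σ, h => (logRel_evalTm t γ σ h).2
  | _, _, .lam (B := B) t, _, γ, σ, h => fun ρ a u hu => by
      have ih := logRel_evalTm t (tpCtx termFrame termVal _ ρ γ, a)
        (Subst.cons u fun C x => (σ C x).rename ρ) ⟨LogRelCtx.rename _ ρ h, hu⟩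
      refine ih.of_eqTm B (EqTm.symm ?_)
      rw [← Tm.subst0_rename_subst_lift]
      exact .arr_beta _ _
  | _, _, .app t u, Δ, γ, σ, h => by
      have := logRel_evalTm t γ σ h (OPE.id Δ) _ _ (logRel_evalTm u γ σ h)
      rwa [Tm.rename_id] at this
  | _, _, .ret t, _, γ, σ, h => ⟨t.subst σ, logRel_evalTm t γ σ h, .refl _⟩
  | _, _, .lett t u, Δ, γ, σ, h => by
      obtain ⟨v, hv, ht⟩ := logRel_evalTm t γ σ h
      let d := evalTm termFrame termVal t Δ γ
      obtain ⟨w, hw, hu⟩ := logRel_evalTm u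
        (tpCtx termFrame termVal _ (Lets.incl d.2.1) γ, d.2.2)
        (Subst.cons v fun C x => (σ C x).rename (Lets.incl d.2.1)) ⟨LogRelCtx.rename _ _ h, hv⟩
      exact ⟨w, hw, Lets.append_wrap _ _ (.ret w) ▸ Lets.eqTm_lett_subst_lift ht hu⟩

def idEnv : ∀ Γ : Ctx, evalCtx termFrame termVal Γ Γ
  | [] => PUnit.unit
  | A :: Γ =>
    (tpCtx termFrame termVal Γ (OPE.drop A (OPE.id Γ)) (idEnv Γ), reflect A (.var .zero))

theorem logRelCtx_idEnv : ∀ Γ : Ctx, LogRelCtx Γ (idEnv Γ) (Subst.id Γ)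
  | [] => trivial
  | A :: Γ => by
    refine ⟨?_, logRel_reflect A (.var .zero)⟩
    have h := LogRelCtx.rename Γ (.drop A (OPE.id Γ)) (logRelCtx_idEnv Γ)
    simp only [Subst.id, Tm.rename, OPE.var, OPE.var_id] at h
    exact h

theorem eqTm_reify_evalTm_idEnv {Γ : Ctx} {A : Ty} (t : Tm Γ A) :
    EqTm t (reify A (evalTm termFrame termVal t Γ (idEnv Γ))) := by
  simpa using eqTm_reify A _ _ (logRel_evalTm t (idEnv Γ) (Subst.id Γ) (logRelCtx_idEnv Γ))

/-- completeness of proof-relevant possible-world semantics for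
MLC: if `⟦t⟧ = ⟦u⟧` holds in every proof-relevant possible-world model
determined by an MLC-frame, then `Γ ⊢ t ≡ u : A` in the equational theory of
MLC. -/
theorem completeness_possible_world_semantics {Γ : Ctx} {A : Ty} (t u : Tm Γ A)
    (h : ∀ (F : MLCFrame) (Vι : F.W ⥤ Type) (w : F.W) (γ : evalCtx F Vι Γ w),
      evalTm F Vι t w γ = evalTm F Vι u w γ) :
    EqTm t u := by
  have hu := eqTm_reify_evalTm_idEnv u
  rw [← h termFrame termVal Γ (idEnv Γ)] at hu
  exact (eqTm_reify_evalTm_idEnv t).trans hu.symm
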